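/- arXiv:2110.13350 — 6 statements merged into one kernel-verified Lean document; each statement's English description precedes it below -/
import Mathlib

section
/- Let m be a positive integer divisible by 64. Let S be a family of subsets of [m], each of size m/16, and let W be a family of subsets of [m], each of size m/8, such that (i) every B ∈ W contains some A ∈ S as a subset, and (ii) every subset C of [m] of size m/16 is contained in some B ∈ W. Then (C(15m/16, m/16) / C(m/8, m/16)) · |S| + |W| ≥ e^{23m/8960} · C(m, m/16) / C(m/8, m/16), where C(a,b) denotes the binomial coefficient. -/
/-!
Write `k = m / 16` and `t = ⌊k / 3⌋`. Every `k`-set `C` lies in some `B ∈ W`, and `B` contains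
some `A ∈ S`. Either `|C ∩ A| ≤ t`, and a `2k`-set `B` with a marked `k`-subset `A` has at most
`D = ∑_{j ≤ t} C(k, j)²` such subsets; or `|C ∩ A| > t`, and for a fixed `A` at most
`E = C(k, t + 1) C(m, k - t - 1)` sets `C` do so. Hence `C(m, k) ≤ |W| D + |S| E`. Ratio chains
along rows and columns of Pascal's triangle give `24ᵏ D ≤ 23ᵏ C(2k, k)` and
`24ᵏ E ≤ 23ᵏ C(15k, k)`, and `e^{23/560} ≤ 1 / (1 - 23/560) ≤ 24/23` finishes the proof.
-/

open Finset

namespace Nat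

theorem mul_choose_le_mul_choose_succ {n a p q : ℕ} (h : p * (a + 1) ≤ q * (n - a)) :
    p * n.choose a ≤ q * n.choose (a + 1) := by
  refine Nat.le_of_mul_le_mul_right ?_ a.succ_pos
  calc p * n.choose a * (a + 1) = n.choose a * (p * (a + 1)) := by ring
    _ ≤ n.choose a * (q * (n - a)) := Nat.mul_le_mul_left _ h
    _ = q * n.choose (a + 1) * (a + 1) := by rw [mul_assoc, choose_succ_right_eq]; ring

/-- Along a row of Pascal's triangle the ratio `C(n, i + 1) / C(n, i)` decreases in `i`, so the
condition at the last step of `a → a + j` controls every step. -/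
theorem pow_mul_choose_le_pow_mul_choose_add {n a j p q : ℕ}
    (h : p * (a + j) ≤ q * (n + 1 - (a + j))) :
    p ^ j * n.choose a ≤ q ^ j * n.choose (a + j) := by
  induction j with
  | zero => simp
  | succ j ih =>
    have hstep : p * (a + j + 1) ≤ q * (n - (a + j)) :=
      h.trans (Nat.mul_le_mul_left _ (by omega))
    have ih' := ih ((Nat.mul_le_mul_left _ (by omega)).trans
      (h.trans (Nat.mul_le_mul_left _ (by omega))))
    calc p ^ (j + 1) * n.choose a = p * (p ^ j * n.choose a) := by ring
      _ ≤ p * (q ^ j * n.choose (a + j)) := Nat.mul_le_mul_left _ ih'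
      _ = q ^ j * (p * n.choose (a + j)) := by ring
      _ ≤ q ^ j * (q * n.choose (a + j + 1)) :=
          Nat.mul_le_mul_left _ (mul_choose_le_mul_choose_succ hstep)
      _ = q ^ (j + 1) * n.choose (a + (j + 1)) := by rw [← add_assoc]; ring

theorem pow_mul_choose_add_le_pow_mul_choose {n k j p q : ℕ} (hk : k ≤ n) (hpq : p ≤ q)
    (h : p * (n + 1) ≤ q * (n + 1 - k)) :
    p ^ j * (n + j).choose k ≤ q ^ j * n.choose k := by
  induction j with
  | zero => simp
  | succ j ih =>
    have hstep : p * (n + j).choose k * (n + j + 1) ≤ q * (n + j).choose k * (n + j + 1 - k) := by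
      have : p * (n + j + 1) ≤ q * (n + j + 1 - k) := by
        rw [show n + j + 1 - k = (n + 1 - k) + j by omega]
        linarith [Nat.mul_le_mul_right j hpq]
      calc p * (n + j).choose k * (n + j + 1) = (n + j).choose k * (p * (n + j + 1)) := by ring
        _ ≤ (n + j).choose k * (q * (n + j + 1 - k)) := Nat.mul_le_mul_left _ this
        _ = _ := by ring
    have hstep' : p * (n + j + 1).choose k ≤ q * (n + j).choose k := by
      refine Nat.le_of_mul_le_mul_right ?_ (show 0 < n + j + 1 - k by omega)
      rw [mul_assoc, ← choose_mul_succ_eq]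
      calc p * ((n + j).choose k * (n + j + 1)) = p * (n + j).choose k * (n + j + 1) := by ring
        _ ≤ _ := hstep
    calc p ^ (j + 1) * (n + (j + 1)).choose k = p ^ j * (p * (n + j + 1).choose k) := by
          rw [← add_assoc]; ring
      _ ≤ p ^ j * (q * (n + j).choose k) := Nat.mul_le_mul_left _ hstep'
      _ = q * (p ^ j * (n + j).choose k) := by ring
      _ ≤ q * (q ^ j * n.choose k) := Nat.mul_le_mul_left _ ih
      _ = q ^ (j + 1) * n.choose k := by ring

theorem three_mul_sum_choose_sq_le {k t : ℕ} (h : 3 * t ≤ k) :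
    3 * ∑ j ∈ range (t + 1), k.choose j ^ 2 ≤ 4 * k.choose t ^ 2 := by
  induction t with
  | zero => simp
  | succ t ih =>
    have hdouble : 2 * k.choose t ≤ 1 * k.choose (t + 1) :=
      mul_choose_le_mul_choose_succ (by omega)
    rw [sum_range_succ]
    nlinarith [ih (by omega)]

theorem choose_sq_le_choose_two_mul {k c : ℕ} (hc : c ≤ k) : k.choose c ^ 2 ≤ (2 * k).choose k := by
  rw [← sum_range_choose_sq]
  exact single_le_sum (f := fun i => k.choose i ^ 2) (fun _ _ => Nat.zero_le _)
    (mem_range.2 (by omega))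

end Nat

open Nat

section Covering

variable {α : Type*} [DecidableEq α]

theorem card_powersetCard_filter_card_inter_eq_le (A B : Finset α) (k j : ℕ) :
    #{C ∈ B.powersetCard k | #(C ∩ A) = j} ≤ (#A).choose j * (#(B \ A)).choose (k - j) := by
  rw [← card_powersetCard, ← card_powersetCard, ← card_product]
  refine card_le_card_of_injOn (fun C => (C ∩ A, C \ A)) (fun C hC => ?_) (fun C₁ _ C₂ _ h => ?_)
  · simp only [mem_coe, mem_filter, mem_powersetCard] at hC
    obtain ⟨⟨hCB, hCk⟩, hCj⟩ := hC
    simp only [mem_coe, mem_product, mem_powersetCard]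
    have := card_inter_add_card_sdiff C A
    exact ⟨⟨inter_subset_right, hCj⟩, sdiff_subset_sdiff hCB le_rfl, by omega⟩
  · simp only [Prod.mk.injEq] at h
    rw [← sdiff_union_inter C₁ A, h.1, h.2, sdiff_union_inter]

theorem card_powersetCard_filter_card_inter_le (A B : Finset α) (k t : ℕ) :
    #{C ∈ B.powersetCard k | #(C ∩ A) ≤ t} ≤
      ∑ j ∈ range (t + 1), (#A).choose j * (#(B \ A)).choose (k - j) := by
  calc #{C ∈ B.powersetCard k | #(C ∩ A) ≤ t}
      ≤ #((range (t + 1)).biUnion fun j => {C ∈ B.powersetCard k | #(C ∩ A) = j}) :=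
        card_le_card fun C hC => by
          simp only [mem_filter] at hC
          simp only [mem_biUnion, mem_range, mem_filter]
          exact ⟨_, Nat.lt_succ_of_le hC.2, hC.1, rfl⟩
    _ ≤ ∑ j ∈ range (t + 1), #{C ∈ B.powersetCard k | #(C ∩ A) = j} := card_biUnion_le
    _ ≤ _ := sum_le_sum fun j _ => card_powersetCard_filter_card_inter_eq_le A B k j

theorem card_powersetCard_filter_lt_card_inter_le [Fintype α] (A : Finset α) (k t : ℕ) :
    #{C ∈ (univ : Finset α).powersetCard k | t < #(C ∩ A)} ≤
      (#A).choose (t + 1) * (Fintype.card α).choose (k - (t + 1)) := by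
  rw [← card_powersetCard, ← Finset.card_univ, ← card_powersetCard, ← card_product]
  refine (card_le_card fun C hC => ?_).trans (card_image_le (f := fun p => p.1 ∪ p.2))
  simp only [mem_filter, mem_powersetCard] at hC
  obtain ⟨⟨-, hCk⟩, hlt⟩ := hC
  obtain ⟨P, hP, hPcard⟩ := exists_subset_card_eq (show t + 1 ≤ #(C ∩ A) from hlt)
  refine mem_image.2 ⟨(P, C \ P), mem_product.2 ⟨mem_powersetCard.2
    ⟨hP.trans inter_subset_right, hPcard⟩, mem_powersetCard.2 ⟨subset_univ _, ?_⟩⟩,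
    union_sdiff_of_subset (hP.trans inter_subset_left)⟩
  rw [card_sdiff_of_subset (hP.trans inter_subset_left), hCk, hPcard]

theorem choose_le_of_covering [Fintype α] {S W : Finset (Finset α)} {a b k : ℕ} (t : ℕ)
    (hS : ∀ A ∈ S, #A = a) (hW : ∀ B ∈ W, #B = b) (hi : ∀ B ∈ W, ∃ A ∈ S, A ⊆ B)
    (hii : ∀ C : Finset α, #C = k → ∃ B ∈ W, C ⊆ B) :
    (Fintype.card α).choose k ≤
      #W * ∑ j ∈ range (t + 1), a.choose j * (b - a).choose (k - j) +
        #S * (a.choose (t + 1) * (Fintype.card α).choose (k - (t + 1))) := by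
  choose! g hgS hgB using hi
  have hcover : univ.powersetCard k ⊆
      (W.biUnion fun B => {C ∈ B.powersetCard k | #(C ∩ g B) ≤ t}) ∪
        S.biUnion fun A => {C ∈ univ.powersetCard k | t < #(C ∩ A)} := by
    intro C hC
    have hCk := (mem_powersetCard.1 hC).2
    obtain ⟨B, hB, hCB⟩ := hii C hCk
    rcases le_or_gt #(C ∩ g B) t with hle | hlt
    · exact mem_union_left _ (mem_biUnion.2
        ⟨B, hB, mem_filter.2 ⟨mem_powersetCard.2 ⟨hCB, hCk⟩, hle⟩⟩)
    · exact mem_union_right _ (mem_biUnion.2 ⟨g B, hgS B hB, mem_filter.2 ⟨hC, hlt⟩⟩)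
  calc (Fintype.card α).choose k = #(univ.powersetCard k) := by
        rw [card_powersetCard, Finset.card_univ]
    _ ≤ _ := card_le_card hcover
    _ ≤ _ := card_union_le _ _
    _ ≤ _ := Nat.add_le_add (card_biUnion_le_card_mul _ _ _ fun B hB => ?_)
        (card_biUnion_le_card_mul _ _ _ fun A hA => ?_)
  · have h := card_powersetCard_filter_card_inter_le (g B) B k t
    rwa [card_sdiff_of_subset (hgB B hB), hW B hB, hS _ (hgS B hB)] at h
  · have h := card_powersetCard_filter_lt_card_inter_le A k t
    rwa [hS A hA] at h

end Covering

theorem four_mul_pow_mul_le {k d : ℕ} (hd : 4 ≤ d) (hk : k ≤ 15 * d + 6) :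
    4 * 24 ^ k * 4 ^ d ≤ 3 * 23 ^ k * 9 ^ d := by
  have hshift : 24 ^ k * 23 ^ (15 * d + 6) ≤ 23 ^ k * 24 ^ (15 * d + 6) := by
    obtain ⟨e, he⟩ := Nat.exists_eq_add_of_le hk
    rw [he, pow_add, pow_add, mul_left_comm]
    exact Nat.mul_le_mul_left _ (Nat.mul_le_mul_left _ (Nat.pow_le_pow_left (by norm_num) e))
  have hextreme : 4 * 24 ^ (15 * d + 6) * 4 ^ d ≤ 3 * 23 ^ (15 * d + 6) * 9 ^ d := by
    obtain ⟨e, rfl⟩ := Nat.exists_eq_add_of_le hd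
    calc 4 * 24 ^ (15 * (4 + e) + 6) * 4 ^ (4 + e) = (4 * 24 ^ 66 * 4 ^ 4) * (24 ^ 15 * 4) ^ e := by
          rw [mul_pow, ← pow_mul]; ring
      _ ≤ (3 * 23 ^ 66 * 9 ^ 4) * (23 ^ 15 * 9) ^ e :=
          Nat.mul_le_mul (by norm_num) (Nat.pow_le_pow_left (by norm_num) e)
      _ = 3 * 23 ^ (15 * (4 + e) + 6) * 9 ^ (4 + e) := by rw [mul_pow, ← pow_mul]; ring
  refine Nat.le_of_mul_le_mul_right (c := 23 ^ (15 * d + 6)) ?_ (by positivity)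
  calc 4 * 24 ^ k * 4 ^ d * 23 ^ (15 * d + 6) = 4 * 4 ^ d * (24 ^ k * 23 ^ (15 * d + 6)) := by ring
    _ ≤ 4 * 4 ^ d * (23 ^ k * 24 ^ (15 * d + 6)) := Nat.mul_le_mul_left _ hshift
    _ = 23 ^ k * (4 * 24 ^ (15 * d + 6) * 4 ^ d) := by ring
    _ ≤ 23 ^ k * (3 * 23 ^ (15 * d + 6) * 9 ^ d) := Nat.mul_le_mul_left _ hextreme
    _ = 3 * 23 ^ k * 9 ^ d * 23 ^ (15 * d + 6) := by ring

theorem pow_mul_sum_choose_sq_le (k : ℕ) :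
    24 ^ k * ∑ j ∈ range (k / 3 + 1), k.choose j ^ 2 ≤ 23 ^ k * (2 * k).choose k := by
  -- For `k ≥ 52` the gain `(3/2)^(2d)` of the ratio chain from `k/3` to `2k/5` beats
  -- `(4/3) (24/23)ᵏ`; smaller `k` are checked by computation.
  rcases lt_or_ge k 52 with hk | hk
  · have hsmall : ∀ n < 52,
        24 ^ n * ∑ j ∈ range (n / 3 + 1), n.choose j ^ 2 ≤ 23 ^ n * (2 * n).choose n := by
      simp only [choose_eq_descFactorial_div_factorial]
      decide
    exact hsmall k hk
  set t := k / 3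
  set c := (2 * k + 2) / 5
  set d := c - t
  have hratio : 3 ^ d * k.choose t ≤ 2 ^ d * k.choose c := by
    have h := pow_mul_choose_le_pow_mul_choose_add (n := k) (a := t) (j := d) (p := 3) (q := 2)
      (by omega)
    rwa [show t + d = c by omega] at h
  refine Nat.le_of_mul_le_mul_left (c := 3 * 9 ^ d) ?_ (by positivity)
  calc 3 * 9 ^ d * (24 ^ k * ∑ j ∈ range (t + 1), k.choose j ^ 2)
      = 24 ^ k * 9 ^ d * (3 * ∑ j ∈ range (t + 1), k.choose j ^ 2) := by ring
    _ ≤ 24 ^ k * 9 ^ d * (4 * k.choose t ^ 2) :=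
        Nat.mul_le_mul_left _ (three_mul_sum_choose_sq_le (by omega))
    _ = 4 * 24 ^ k * (3 ^ d * k.choose t) ^ 2 := by
        rw [show (9 : ℕ) = 3 ^ 2 by rfl, ← pow_mul, mul_comm 2 d, pow_mul]; ring
    _ ≤ 4 * 24 ^ k * (2 ^ d * k.choose c) ^ 2 := by gcongr
    _ = 4 * 24 ^ k * 4 ^ d * k.choose c ^ 2 := by
        rw [show (4 : ℕ) = 2 ^ 2 by rfl, ← pow_mul, mul_comm 2 d, pow_mul]; ring
    _ ≤ 3 * 23 ^ k * 9 ^ d * k.choose c ^ 2 :=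
        Nat.mul_le_mul_right _ (four_mul_pow_mul_le (by omega) (by omega))
    _ ≤ 3 * 23 ^ k * 9 ^ d * (2 * k).choose k :=
        Nat.mul_le_mul_left _ (choose_sq_le_choose_two_mul (by omega))
    _ = 3 * 9 ^ d * (23 ^ k * (2 * k).choose k) := by ring

theorem pow_mul_choose_mul_choose_le {k t : ℕ} (h : k ≤ 3 * t + 2) :
    24 ^ k * (k.choose (t + 1) * (16 * k).choose (k - (t + 1))) ≤ 23 ^ k * (15 * k).choose k := by
  rcases lt_or_ge k (t + 1) with hkt | hkt
  · simp [choose_eq_zero_of_lt hkt]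
  have hbottom : 15 ^ (t + 1) * (16 * k).choose (k - (t + 1)) ≤ (16 * k).choose k := by
    have h := pow_mul_choose_le_pow_mul_choose_add (n := 16 * k) (a := k - (t + 1)) (j := t + 1)
      (p := 15) (q := 1) (by rw [Nat.sub_add_cancel hkt]; omega)
    rwa [Nat.sub_add_cancel hkt, one_pow, one_mul] at h
  have htop : 14 ^ k * (16 * k).choose k ≤ 15 ^ k * (15 * k).choose k := by
    have h := pow_mul_choose_add_le_pow_mul_choose (n := 15 * k) (k := k) (j := k) (p := 14)
      (q := 15) (by omega) (by norm_num) (by omega)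
    rwa [show 15 * k + k = 16 * k by ring] at h
  -- cubing turns `k < 3 * (t + 1)` into a comparison of bases: `720 ^ 3 ≤ 322 ^ 3 * 15`
  have hnum : 720 ^ k ≤ 322 ^ k * 15 ^ (t + 1) := by
    refine (Nat.pow_le_pow_iff_left (n := 3) (by norm_num)).1 ?_
    calc (720 ^ k) ^ 3 = (720 ^ 3) ^ k := by rw [← pow_mul, ← pow_mul, mul_comm]
      _ ≤ (322 ^ 3 * 15) ^ k := Nat.pow_le_pow_left (by norm_num) k
      _ = (322 ^ k) ^ 3 * 15 ^ k := by rw [mul_pow, ← pow_mul, ← pow_mul]; ring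
      _ ≤ (322 ^ k) ^ 3 * 15 ^ ((t + 1) * 3) :=
          Nat.mul_le_mul_left _ (Nat.pow_le_pow_right (by norm_num) (by omega))
      _ = (322 ^ k * 15 ^ (t + 1)) ^ 3 := by rw [mul_pow, pow_mul]
  have h720 : 24 ^ k * 2 ^ k * 15 ^ k = 720 ^ k := by rw [← mul_pow, ← mul_pow]; norm_num
  have h322 : 23 ^ k * 14 ^ k = 322 ^ k := by rw [← mul_pow]; norm_num
  refine Nat.le_of_mul_le_mul_left (c := 14 ^ k * 15 ^ (t + 1)) ?_ (by positivity)
  calc 14 ^ k * 15 ^ (t + 1) * (24 ^ k * (k.choose (t + 1) * (16 * k).choose (k - (t + 1))))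
      = 14 ^ k * 24 ^ k * k.choose (t + 1) * (15 ^ (t + 1) * (16 * k).choose (k - (t + 1))) := by
        ring
    _ ≤ 14 ^ k * 24 ^ k * 2 ^ k * (16 * k).choose k :=
        Nat.mul_le_mul (Nat.mul_le_mul_left _ (choose_le_two_pow _ _)) hbottom
    _ = 24 ^ k * 2 ^ k * (14 ^ k * (16 * k).choose k) := by ring
    _ ≤ 24 ^ k * 2 ^ k * (15 ^ k * (15 * k).choose k) := Nat.mul_le_mul_left _ htop
    _ = 24 ^ k * 2 ^ k * 15 ^ k * (15 * k).choose k := by ring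
    _ ≤ 23 ^ k * 14 ^ k * 15 ^ (t + 1) * (15 * k).choose k := by
        rw [h720, h322]; exact Nat.mul_le_mul_right _ hnum
    _ = 14 ^ k * 15 ^ (t + 1) * (23 ^ k * (15 * k).choose k) := by ring

theorem exp_mul_le_of_pow_mul_le {k x y : ℕ} (h : 24 ^ k * x ≤ 23 ^ k * y) :
    Real.exp (23 * k / 560) * x ≤ y := by
  have hexp : Real.exp (23 / 560) ≤ 24 / 23 :=
    (Real.exp_bound_div_one_sub_of_interval (by norm_num) (by norm_num)).trans (by norm_num)
  have hcast : (24 : ℝ) ^ k * x ≤ 23 ^ k * y := by exact_mod_cast h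
  calc Real.exp (23 * k / 560) * x = Real.exp (23 / 560) ^ k * x := by
        rw [← Real.exp_nat_mul]; ring_nf
    _ ≤ (24 / 23) ^ k * x := by gcongr
    _ = 24 ^ k * x / 23 ^ k := by rw [div_pow]; ring
    _ ≤ y := by rw [div_le_iff₀ (by positivity)]; linarith

theorem stmt_0_general (m : ℕ) (hdvd : 64 ∣ m)
    (S W : Finset (Finset (Fin m)))
    (hS : ∀ A ∈ S, A.card = m / 16)
    (hW : ∀ B ∈ W, B.card = m / 8)
    (hi : ∀ B ∈ W, ∃ A ∈ S, A ⊆ B)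
    (hii : ∀ C : Finset (Fin m), C.card = m / 16 → ∃ B ∈ W, C ⊆ B) :
    Real.exp (23 * m / 8960) * (Nat.choose m (m / 16)) / (Nat.choose (m / 8) (m / 16)) ≤
      ((Nat.choose (15 * m / 16) (m / 16) : ℝ) / (Nat.choose (m / 8) (m / 16))) * S.card
        + W.card := by
  obtain ⟨k, rfl⟩ : 16 ∣ m := (by norm_num : 16 ∣ 64).trans hdvd
  rw [show 16 * k / 16 = k by omega, show 16 * k / 8 = 2 * k by omega] at *
  rw [show 15 * (16 * k) / 16 = 15 * k by omega]
  have hcount := choose_le_of_covering (k / 3) hS hW hi hii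
  have hsq : ∑ j ∈ range (k / 3 + 1), k.choose j * (2 * k - k).choose (k - j) =
      ∑ j ∈ range (k / 3 + 1), k.choose j ^ 2 :=
    sum_congr rfl fun j hj => by
      rw [show 2 * k - k = k by omega, choose_symm (by grind), sq]
  rw [Fintype.card_fin, hsq] at hcount
  have hD := exp_mul_le_of_pow_mul_le (pow_mul_sum_choose_sq_le k)
  have hE := exp_mul_le_of_pow_mul_le (pow_mul_choose_mul_choose_le (k := k) (t := k / 3) (by omega))
  have hexp : (23 * ((16 * k : ℕ) : ℝ) / 8960) = 23 * k / 560 := by push_cast; ring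
  set D := ∑ j ∈ range (k / 3 + 1), k.choose j ^ 2
  set E := k.choose (k / 3 + 1) * (16 * k).choose (k - (k / 3 + 1))
  have hcount' : ((16 * k).choose k : ℝ) ≤ #W * D + #S * E := by exact_mod_cast hcount
  have hP : (0 : ℝ) < (2 * k).choose k := by exact_mod_cast Nat.choose_pos (by omega)
  rw [hexp, div_le_iff₀ hP]
  calc Real.exp (23 * k / 560) * (16 * k).choose k
      ≤ Real.exp (23 * k / 560) * (#W * D + #S * E) := by gcongr
    _ = #W * (Real.exp (23 * k / 560) * D) + #S * (Real.exp (23 * k / 560) * E) := by ring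
    _ ≤ #W * (2 * k).choose k + #S * (15 * k).choose k := by gcongr
    _ = ((15 * k).choose k / (2 * k).choose k * #S + #W) * (2 * k).choose k := by
        field_simp; ring

/-- integral lower bound for the paper's DST gap instance. -/
theorem stmt_0 (m : ℕ) (hm : 0 < m) (hdvd : 64 ∣ m)
    (S W : Finset (Finset (Fin m)))
    (hS : ∀ A ∈ S, A.card = m / 16)
    (hW : ∀ B ∈ W, B.card = m / 8)
    (hi : ∀ B ∈ W, ∃ A ∈ S, A ⊆ B)
    (hii : ∀ C : Finset (Fin m), C.card = m / 16 → ∃ B ∈ W, C ⊆ B) :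
    Real.exp (23 * m / 8960) * (Nat.choose m (m / 16)) / (Nat.choose (m / 8) (m / 16)) ≤
      ((Nat.choose (15 * m / 16) (m / 16) : ℝ) / (Nat.choose (m / 8) (m / 16))) * S.card
        + W.card :=
  stmt_0_general m hdvd S W hS hW hi hii
end

section
/- Let 𝒜, ℬ, K be finite sets, let d, d', s be positive integers, and let E_H ⊆ 𝒜 × ℬ be a bipartite edge set such that every u ∈ 𝒜 is incident to exactly d edges and every v ∈ ℬ is incident to exactly d' edges. Let col : E_H → K be a coloring such that for every t ∈ K the color class M_t = col⁻¹(t) is a matching (no two edges of M_t share an endpoint) of size exactly s. For v ∈ ℬ let K_v = {t ∈ K : some edge incident to v has color t}. Let α ≥ 1 be a real number. Suppose that for every u ∈ 𝒜 there exists a set J_u ⊆ K with |J_u| ≤ d/α such that for every edge (u,v) ∈ E_H one has |K_v \ J_u| ≤ d'/α. Then for every S ⊆ 𝒜 and W ⊆ ℬ such that (i) every v ∈ W has some u ∈ S with (u,v) ∈ E_H, and (ii) for every t ∈ K there is some v ∈ W with t ∈ K_v, it holds that (|ℬ|/|𝒜|) · |S| + |W| ≥ α · |ℬ|/s. -/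
/-!
Every colour `t ∈ K` is hit by some `v ∈ W`; choosing a neighbour `u ∈ S` of `v`, either
`t ∈ J_u` or `t ∈ K_v \ J_u`. So `K` is covered by `|S|` sets of size at most `d / α` and
`|W|` sets of size at most `d' / α`, i.e. `α |K| ≤ d |S| + d' |W|`. Double counting the edges
by their endpoints and colours gives `d |𝒜| = d' |ℬ| = s |K|`, which turns this into the claim.
-/

open Finset

theorem Finset.card_eq_mul_card_of_card_fiber_eq {ι M : Type*} [DecidableEq M]
    {s : Finset ι} {t : Finset M} {f : ι → M} {n : ℕ} (hf : ∀ a ∈ s, f a ∈ t)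
    (hn : ∀ b ∈ t, #{a ∈ s | f a = b} = n) : #s = n * #t := by
  rw [card_eq_sum_card_fiberwise hf, sum_congr rfl hn, sum_const, smul_eq_mul, mul_comm]

theorem Finset.card_le_card_mul_add_card_mul_of_sdiff_cover {ι κ γ : Type*}
    [DecidableEq γ] {K : Finset γ} {S : Finset ι} {W : Finset κ} {J : ι → Finset γ}
    {N : κ → Finset γ} {a b : ℝ} (hJ : ∀ u ∈ S, (#(J u) : ℝ) ≤ a)
    (hN : ∀ v ∈ W, ∃ u ∈ S, (#(N v \ J u) : ℝ) ≤ b)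
    (hK : ∀ t ∈ K, ∃ v ∈ W, t ∈ N v) :
    (#K : ℝ) ≤ #S * a + #W * b := by
  choose u huS hub using hN
  have hcover : K ⊆ S.biUnion J ∪ W.attach.biUnion fun v => N v \ J (u v v.2) := by
    intro t ht
    obtain ⟨v, hv, htv⟩ := hK t ht
    by_cases htJ : t ∈ J (u v hv)
    · exact mem_union_left _ (mem_biUnion.2 ⟨u v hv, huS v hv, htJ⟩)
    · exact mem_union_right _
        (mem_biUnion.2 ⟨⟨v, hv⟩, mem_attach _ _, mem_sdiff.2 ⟨htv, htJ⟩⟩)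
  calc (#K : ℝ)
    _ ≤ ∑ w ∈ S, (#(J w) : ℝ) + ∑ v ∈ W.attach, (#(N v \ J (u v v.2)) : ℝ) := by
      exact_mod_cast (card_le_card hcover).trans
        ((card_union_le _ _).trans (add_le_add card_biUnion_le card_biUnion_le))
    _ ≤ #S • a + #W.attach • b :=
      add_le_add (sum_le_card_nsmul _ _ _ hJ) (sum_le_card_nsmul _ _ _ fun v _ => hub v v.2)
    _ = #S * a + #W * b := by rw [card_attach, nsmul_eq_mul, nsmul_eq_mul]

theorem mul_div_le_div_mul_add_of_double_count {α A B k s d d' x y : ℝ}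
    (hα : 0 < α) (hs : 0 < s) (hd' : 0 < d') (hy : 0 ≤ y) (hAB : d * A = d' * B)
    (hkB : s * k = d' * B)
    (hk : k ≤ x * (d / α) + y * (d' / α)) : α * B / s ≤ B / A * x + y := by
  -- With `A = 0` the factor `B / A` is the junk value `0`, but then `B = 0` as well.
  rcases eq_or_ne A 0 with rfl | hA
  · have hB : B = 0 := by nlinarith
    subst hB
    simpa using hy
  have hBA : B / A = d / d' := by rw [div_eq_div_iff hA hd'.ne']; linarith
  have hαk : α * k ≤ d * x + d' * y := by
    calc α * k ≤ α * (x * (d / α) + y * (d' / α)) := mul_le_mul_of_nonneg_left hk hα.le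
      _ = d * x + d' * y := by field_simp
  rw [hBA, div_le_iff₀ hs]
  calc α * B = α * k * s / d' := by field_simp; linarith
    _ ≤ (d * x + d' * y) * s / d' := by gcongr
    _ = (d / d' * x + y) * s := by field_simp

theorem stmt_1_general {V₁ V₂ V₃ : Type*} [DecidableEq V₁] [DecidableEq V₂] [DecidableEq V₃]
    (𝒜 : Finset V₁) (ℬ : Finset V₂) (K : Finset V₃)
    (d d' s : ℕ) (hd' : 0 < d') (hs : 0 < s)
    (EH : Finset (V₁ × V₂)) (hEH : EH ⊆ 𝒜 ×ˢ ℬ)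
    (col : V₁ × V₂ → V₃) (hcol : ∀ e ∈ EH, col e ∈ K)
    (hdegA : ∀ u ∈ 𝒜, (EH.filter (fun e => e.1 = u)).card = d)
    (hdegB : ∀ v ∈ ℬ, (EH.filter (fun e => e.2 = v)).card = d')
    (hsize : ∀ t ∈ K, (EH.filter (fun e => col e = t)).card = s)
    (α : ℝ) (hα : 1 ≤ α)
    (hJ : ∀ u ∈ 𝒜, ∃ J ⊆ K, (J.card : ℝ) ≤ d / α ∧
      ∀ e ∈ EH, e.1 = u →
        (((K.filter (fun t => ∃ e' ∈ EH, e'.2 = e.2 ∧ col e' = t)) \ J).card : ℝ)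
          ≤ d' / α)
    (S : Finset V₁) (hS : S ⊆ 𝒜) (W : Finset V₂)
    (hi : ∀ v ∈ W, ∃ u ∈ S, (u, v) ∈ EH)
    (hii : ∀ t ∈ K, ∃ v ∈ W, ∃ e ∈ EH, e.2 = v ∧ col e = t) :
    α * ℬ.card / s ≤ ((ℬ.card : ℝ) / 𝒜.card) * S.card + W.card := by
  have hA := card_eq_mul_card_of_card_fiber_eq (fun e he => (mem_product.1 (hEH he)).1) hdegA
  have hB := card_eq_mul_card_of_card_fiber_eq (fun e he => (mem_product.1 (hEH he)).2) hdegB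
  have hK := card_eq_mul_card_of_card_fiber_eq hcol hsize
  choose! J _ hJcard hJedge using hJ
  have hcover : (#K : ℝ) ≤ #S * (d / α) + #W * (d' / α) := by
    refine card_le_card_mul_add_card_mul_of_sdiff_cover
      (N := fun v => {t ∈ K | ∃ e ∈ EH, e.2 = v ∧ col e = t})
      (fun u hu => hJcard u (hS hu)) (fun v hv => ?_) (fun t ht => ?_)
    · obtain ⟨u, hu, huv⟩ := hi v hv
      exact ⟨u, hu, hJedge u (hS hu) (u, v) huv rfl⟩
    · obtain ⟨v, hv, e, he, rfl, rfl⟩ := hii t ht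
      exact ⟨e.2, hv, mem_filter.2 ⟨ht, e, he, rfl, rfl⟩⟩
  exact mul_div_le_div_mul_add_of_double_count (by linarith) (by exact_mod_cast hs)
    (by exact_mod_cast hd') (Nat.cast_nonneg _)
    (by exact_mod_cast hA.symm.trans hB) (by exact_mod_cast hK.symm.trans hB) hcover

/-- the key gap lemma for Zosin–Khuller-type instances. -/
theorem stmt_1 {V₁ V₂ V₃ : Type*} [DecidableEq V₁] [DecidableEq V₂] [DecidableEq V₃]
    (𝒜 : Finset V₁) (ℬ : Finset V₂) (K : Finset V₃)
    (d d' s : ℕ) (hd : 0 < d) (hd' : 0 < d') (hs : 0 < s)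
    (EH : Finset (V₁ × V₂)) (hEH : EH ⊆ 𝒜 ×ˢ ℬ)
    (col : V₁ × V₂ → V₃) (hcol : ∀ e ∈ EH, col e ∈ K)
    (hdegA : ∀ u ∈ 𝒜, (EH.filter (fun e => e.1 = u)).card = d)
    (hdegB : ∀ v ∈ ℬ, (EH.filter (fun e => e.2 = v)).card = d')
    (hmatch : ∀ t ∈ K, ∀ e ∈ EH, ∀ e' ∈ EH,
      col e = t → col e' = t → e ≠ e' → e.1 ≠ e'.1 ∧ e.2 ≠ e'.2)
    (hsize : ∀ t ∈ K, (EH.filter (fun e => col e = t)).card = s)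
    (α : ℝ) (hα : 1 ≤ α)
    (hJ : ∀ u ∈ 𝒜, ∃ J ⊆ K, (J.card : ℝ) ≤ d / α ∧
      ∀ e ∈ EH, e.1 = u →
        (((K.filter (fun t => ∃ e' ∈ EH, e'.2 = e.2 ∧ col e' = t)) \ J).card : ℝ)
          ≤ d' / α)
    (S : Finset V₁) (hS : S ⊆ 𝒜) (W : Finset V₂) (hW : W ⊆ ℬ)
    (hi : ∀ v ∈ W, ∃ u ∈ S, (u, v) ∈ EH)
    (hii : ∀ t ∈ K, ∃ v ∈ W, ∃ e ∈ EH, e.2 = v ∧ col e = t) :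
    α * ℬ.card / s ≤ ((ℬ.card : ℝ) / 𝒜.card) * S.card + W.card :=
  stmt_1_general 𝒜 ℬ K d d' s hd' hs EH hEH col hcol hdegA hdegB hsize α hα hJ S hS W hi hii
end

section
/- Let m be a positive integer divisible by 64 and let A ⊆ [m] with |A| = m/16. Define J_A = {C ⊆ [m] : |C| = m/16 and |C ∩ A| > m/64}. Then |J_A| ≤ e^{-23m/8960} · C(15m/16, m/16), where C(a,b) denotes the binomial coefficient. -/
open Finset

private lemma choose_ratio (k t : ℕ) (ht : t + 1 ≤ 4 * k) :
    14 * (60 * k).choose t ≤ (60 * k).choose (t + 1) := by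
  have h := Nat.choose_succ_right_eq (60 * k) t
  have h1 : 14 * (t + 1) ≤ 60 * k - t := by omega
  have h2 : 14 * (60 * k).choose t * (t + 1) ≤ (60 * k).choose (t + 1) * (t + 1) := by
    rw [h]
    calc 14 * (60 * k).choose t * (t + 1) = (60 * k).choose t * (14 * (t + 1)) := by ring
    _ ≤ (60 * k).choose t * (60 * k - t) := Nat.mul_le_mul_left _ h1
  exact Nat.le_of_mul_le_mul_right h2 (Nat.succ_pos t)

private lemma pow14_choose (k j : ℕ) (hj : j ≤ 4 * k) :
    14 ^ j * (60 * k).choose (4 * k - j) ≤ (60 * k).choose (4 * k) := by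
  induction j with
  | zero => simp
  | succ n ih =>
    have hr := choose_ratio k (4 * k - (n + 1)) (by omega)
    rw [show 4 * k - (n + 1) + 1 = 4 * k - n from by omega] at hr
    calc 14 ^ (n + 1) * (60 * k).choose (4 * k - (n + 1))
        = 14 ^ n * (14 * (60 * k).choose (4 * k - (n + 1))) := by ring
      _ ≤ 14 ^ n * (60 * k).choose (4 * k - n) := Nat.mul_le_mul_left _ hr
      _ ≤ (60 * k).choose (4 * k) := ih (by omega)

/-- |J_A| ≤ e^{-23m/8960} · C(15m/16, m/16). -/
theorem stmt_2 (m : ℕ) (hm : 0 < m) (hdvd : 64 ∣ m)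
    (A : Finset (Fin m)) (hA : A.card = m / 16) :
    ((Finset.univ.filter (fun C : Finset (Fin m) =>
        C.card = m / 16 ∧ m / 64 < (C ∩ A).card)).card : ℝ) ≤
      Real.exp (-(23 * m / 8960)) * Nat.choose (15 * m / 16) (m / 16) := by
  classical
  obtain ⟨k, rfl⟩ := hdvd
  have h16 : 64 * k / 16 = 4 * k := by omega
  have h64 : 64 * k / 64 = k := by omega
  have h15 : 15 * (64 * k) / 16 = 60 * k := by omega
  rw [h16] at hA
  rw [h16, h64, h15]
  -- A complement has 60k elements
  have hAc : Aᶜ.card = 60 * k := by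
    rw [Finset.card_compl, hA, Fintype.card_fin]; omega
  -- Step 1: cardinality bound in ℕ
  set S := Finset.univ.filter (fun C : Finset (Fin (64 * k)) =>
      C.card = 4 * k ∧ k < (C ∩ A).card) with hS
  set T := (Finset.Icc (k + 1) (4 * k)).biUnion
      (fun j => A.powersetCard j ×ˢ Aᶜ.powersetCard (4 * k - j)) with hT
  have hmaps : ∀ C ∈ S, (C ∩ A, C \ A) ∈ T := by
    intro C hC
    rw [hS, Finset.mem_filter] at hC
    obtain ⟨-, hC1, hC2⟩ := hC
    have hle : (C ∩ A).card ≤ 4 * k := by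
      rw [← hC1]; exact Finset.card_le_card Finset.inter_subset_left
    have hsum := Finset.card_inter_add_card_sdiff C A
    rw [hT, Finset.mem_biUnion]
    refine ⟨(C ∩ A).card, by simp [Finset.mem_Icc]; omega, ?_⟩
    rw [Finset.mem_product]
    constructor
    · rw [Finset.mem_powersetCard]
      exact ⟨Finset.inter_subset_right, rfl⟩
    · rw [Finset.mem_powersetCard]
      refine ⟨fun x hx => ?_, show (C \ A).card = 4 * k - (C ∩ A).card by omega⟩
      rw [Finset.mem_compl]
      exact (Finset.mem_sdiff.mp hx).2
  have hinj : Set.InjOn (fun C : Finset (Fin (64 * k)) => (C ∩ A, C \ A)) S := by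
    intro C _ D _ h
    simp only [Prod.mk.injEq] at h
    have : C \ A ∪ C ∩ A = D \ A ∪ D ∩ A := by rw [h.1, h.2]
    rwa [Finset.sdiff_union_inter, Finset.sdiff_union_inter] at this
  have hcard : S.card ≤ ∑ j ∈ Finset.Icc (k + 1) (4 * k),
      (4 * k).choose j * (60 * k).choose (4 * k - j) := by
    calc S.card ≤ T.card := Finset.card_le_card_of_injOn _ hmaps hinj
    _ ≤ ∑ j ∈ Finset.Icc (k + 1) (4 * k),
        (A.powersetCard j ×ˢ Aᶜ.powersetCard (4 * k - j)).card :=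
      Finset.card_biUnion_le
    _ = ∑ j ∈ Finset.Icc (k + 1) (4 * k),
        (4 * k).choose j * (60 * k).choose (4 * k - j) := by
      refine Finset.sum_congr rfl fun j _ => ?_
      rw [Finset.card_product, Finset.card_powersetCard, Finset.card_powersetCard, hA, hAc]
  -- Step 2: real estimates
  have hN : ((60 * k).choose (4 * k) : ℝ) ≥ 0 := Nat.cast_nonneg _
  have key : ∀ j ∈ Finset.Icc (k + 1) (4 * k),
      ((4 * k).choose j * (60 * k).choose (4 * k - j) : ℝ) ≤
        (3 / 14) ^ (k + 1) * ((4 * k).choose j * (1 / 3) ^ j) *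
          (60 * k).choose (4 * k) := by
    intro j hj
    rw [Finset.mem_Icc] at hj
    have h1 : ((60 * k).choose (4 * k - j) : ℝ) ≤ (1 / 14) ^ j * (60 * k).choose (4 * k) := by
      have hn := pow14_choose k j hj.2
      have hc : ((14 : ℝ) ^ j) * (60 * k).choose (4 * k - j) ≤ (60 * k).choose (4 * k) := by
        exact_mod_cast hn
      have heq : (1 / 14 : ℝ) ^ j * ((60 * k).choose (4 * k) : ℝ)
          = ((60 * k).choose (4 * k) : ℝ) / 14 ^ j := by
        rw [div_pow]; ring
      rw [heq, le_div_iff₀ (by positivity)]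
      linarith
    have h2 : ((1 : ℝ) / 14) ^ j ≤ (3 / 14) ^ (k + 1) * (1 / 3) ^ j := by
      have : ((1 : ℝ) / 14) ^ j = (3 / 14) ^ j * (1 / 3) ^ j := by
        rw [← mul_pow]; norm_num
      rw [this]
      have h3 : ((3 : ℝ) / 14) ^ j ≤ (3 / 14) ^ (k + 1) :=
        pow_le_pow_of_le_one (by norm_num) (by norm_num) hj.1
      have : (0 : ℝ) ≤ (1 / 3 : ℝ) ^ j := by positivity
      nlinarith
    have hcj : (0 : ℝ) ≤ ((4 * k).choose j : ℝ) := Nat.cast_nonneg _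
    calc ((4 * k).choose j * (60 * k).choose (4 * k - j) : ℝ)
        ≤ (4 * k).choose j * ((1 / 14) ^ j * (60 * k).choose (4 * k)) :=
          mul_le_mul_of_nonneg_left h1 hcj
      _ ≤ (4 * k).choose j * ((3 / 14) ^ (k + 1) * (1 / 3) ^ j * (60 * k).choose (4 * k)) := by
          apply mul_le_mul_of_nonneg_left _ hcj
          exact mul_le_mul_of_nonneg_right h2 hN
      _ = (3 / 14) ^ (k + 1) * ((4 * k).choose j * (1 / 3) ^ j) * (60 * k).choose (4 * k) := by
          ring
  have hsum : ∑ j ∈ Finset.Icc (k + 1) (4 * k), ((4 * k).choose j : ℝ) * (1 / 3) ^ j ≤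
      (4 / 3) ^ (4 * k) := by
    have hsub : Finset.Icc (k + 1) (4 * k) ⊆ Finset.range (4 * k + 1) := by
      intro j hj
      rw [Finset.mem_Icc] at hj
      rw [Finset.mem_range]; omega
    calc ∑ j ∈ Finset.Icc (k + 1) (4 * k), ((4 * k).choose j : ℝ) * (1 / 3) ^ j
        ≤ ∑ j ∈ Finset.range (4 * k + 1), ((4 * k).choose j : ℝ) * (1 / 3) ^ j := by
          apply Finset.sum_le_sum_of_subset_of_nonneg hsub
          intro j _ _; positivity
      _ = (4 / 3) ^ (4 * k) := by
          have := add_pow (1 / 3 : ℝ) 1 (4 * k)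
          norm_num at this
          rw [this]
          exact Finset.sum_congr rfl fun j _ => by ring
  have hexp : ((3 : ℝ) / 14) ^ (k + 1) * (4 / 3) ^ (4 * k) ≤
      Real.exp (-(23 * (64 * k : ℕ) / 8960)) := by
    have he1 : ((117 : ℝ) / 140) ≤ Real.exp (-(23 / 140)) := by
      have := Real.add_one_le_exp (-(23 / 140) : ℝ)
      linarith
    have he2 : (-(23 * ((64 * k : ℕ) : ℝ) / 8960)) = (k : ℝ) * (-(23 / 140)) := by
      push_cast; ring
    rw [he2, Real.exp_nat_mul]
    calc ((3 : ℝ) / 14) ^ (k + 1) * (4 / 3) ^ (4 * k)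
        = (3 / 14) * ((3 / 14) * (4 / 3) ^ 4) ^ k := by
          rw [mul_pow, pow_succ, pow_mul]; ring
      _ ≤ 1 * (117 / 140) ^ k := by
          apply mul_le_mul (by norm_num) _ (by positivity) (by norm_num)
          apply pow_le_pow_left₀ (by norm_num) (by norm_num)
      _ ≤ Real.exp (-(23 / 140)) ^ k := by
          rw [one_mul]
          exact pow_le_pow_left₀ (by norm_num) he1 k
  -- Combine
  calc (S.card : ℝ) ≤ ∑ j ∈ Finset.Icc (k + 1) (4 * k),
        ((4 * k).choose j * (60 * k).choose (4 * k - j) : ℝ) := by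
        exact_mod_cast hcard
    _ ≤ ∑ j ∈ Finset.Icc (k + 1) (4 * k),
        ((3 : ℝ) / 14) ^ (k + 1) * ((4 * k).choose j * (1 / 3) ^ j) * (60 * k).choose (4 * k) :=
      Finset.sum_le_sum key
    _ = (3 / 14) ^ (k + 1) * (∑ j ∈ Finset.Icc (k + 1) (4 * k),
        ((4 * k).choose j : ℝ) * (1 / 3) ^ j) * (60 * k).choose (4 * k) := by
        rw [Finset.mul_sum, Finset.sum_mul]
    _ ≤ (3 / 14) ^ (k + 1) * (4 / 3) ^ (4 * k) * (60 * k).choose (4 * k) := by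
        apply mul_le_mul_of_nonneg_right _ hN
        exact mul_le_mul_of_nonneg_left hsum (by positivity)
    _ ≤ Real.exp (-(23 * (64 * k : ℕ) / 8960)) * (60 * k).choose (4 * k) :=
        mul_le_mul_of_nonneg_right hexp hN
end

section
/- Let m be a positive integer divisible by 64, and let A ⊆ B ⊆ [m] with |A| = m/16 and |B| = m/8. Then the number of subsets C ⊆ B with |C| = m/16 and |C ∩ A| ≤ m/64 is at most e^{-m/256} · C(m/8, m/16), where C(a,b) denotes the binomial coefficient. -/
/-!
Write `m = 64 k`, so `|A| = |B \ A| = 4 k`. Splitting `C` into `C ∩ A` and `C \ A` bounds the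
count by `∑_{j ≤ k} C(4k, j)²`. Below the index `k` the coefficients `C(4k, j)` drop by a factor
of at least `3` per step, and from `C(4k, k)` to `C(4k, 2k)` they grow by at least `(3/2)^k`,
so `C(4k, j) ≤ 2^k 3^(j - 2k) C(4k, 2k)`. Together with `C(4k, 2k)² ≤ C(8k, 4k)` (a single term
of Vandermonde's identity) and `∑_{j ≤ k} 9^j ≤ 10^k`, the count is at most
`(40/81)^k C(8k, 4k)`, and `40/81 ≤ 3/4 ≤ e^(-1/4)`.
-/

open Finset

theorem Finset.card_filter_subset_card_inter_le {α : Type*} [Fintype α] [DecidableEq α]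
    {A B : Finset α} (hAB : A ⊆ B) (r t : ℕ) :
    (univ.filter fun C : Finset α => C ⊆ B ∧ C.card = r ∧ (C ∩ A).card ≤ t).card ≤
      ∑ j ∈ range (t + 1), A.card.choose j * (B.card - A.card).choose (r - j) := by
  calc _ ≤ ((range (t + 1)).biUnion fun j =>
        A.powersetCard j ×ˢ (B \ A).powersetCard (r - j)).card := by
        refine card_le_card_of_injOn (fun C => (C ∩ A, C \ A)) ?_ ?_
        · rintro C hC
          obtain ⟨hCB, rfl, hCA⟩ := (mem_filter.mp hC).2
          simp only [coe_biUnion, coe_range, Set.mem_iUnion, Set.mem_Iio, mem_coe, mem_product,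
            mem_powersetCard, inter_subset_right, true_and]
          refine ⟨(C ∩ A).card, by omega, rfl, sdiff_subset_sdiff hCB subset_rfl, ?_⟩
          have := card_inter_add_card_sdiff C A
          omega
        · intro C _ D _ h
          obtain ⟨hinter, hsdiff⟩ := Prod.mk.inj h
          rw [← sdiff_union_inter C A, ← sdiff_union_inter D A, hinter, hsdiff]
    _ ≤ _ := card_biUnion_le.trans <| sum_le_sum fun j _ => by
        rw [card_product, card_powersetCard, card_powersetCard, card_sdiff_of_subset hAB]

namespace Nat

theorem choose_mul_choose_le_add_choose (m n i j : ℕ) :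
    m.choose i * n.choose j ≤ (m + n).choose (i + j) := by
  rw [add_choose_eq]
  exact single_le_sum (f := fun ij : ℕ × ℕ => m.choose ij.1 * n.choose ij.2)
    (fun _ _ => Nat.zero_le _) (a := (i, j)) (mem_antidiagonal.mpr rfl)

theorem sum_range_pow_le_succ_pow (a k : ℕ) : ∑ j ∈ range (k + 1), a ^ j ≤ (a + 1) ^ k := by
  rw [add_pow]
  exact sum_le_sum fun j hj => by
    simpa using Nat.le_mul_of_pos_right _ (choose_pos (Nat.lt_succ_iff.mp (mem_range.mp hj)))

theorem three_mul_choose_le_choose_succ {n j : ℕ} (h : 4 * j + 3 ≤ n) :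
    3 * n.choose j ≤ n.choose (j + 1) := by
  refine Nat.le_of_mul_le_mul_right ?_ j.succ_pos
  calc 3 * n.choose j * (j + 1) = n.choose j * (3 * (j + 1)) := by ring
    _ ≤ n.choose j * (n - j) := Nat.mul_le_mul_left _ (by omega)
    _ = n.choose (j + 1) * (j + 1) := (choose_succ_right_eq n j).symm

theorem choose_mul_three_pow_sub_le {n j k : ℕ} (hk : 4 * k ≤ n + 1) (hjk : j ≤ k) :
    n.choose j * 3 ^ (k - j) ≤ n.choose k := by
  induction k, hjk using Nat.le_induction with
  | base => simp
  | succ k hjk ih =>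
    calc n.choose j * 3 ^ (k + 1 - j) = 3 * (n.choose j * 3 ^ (k - j)) := by
          rw [show k + 1 - j = k - j + 1 by omega]; ring
      _ ≤ 3 * n.choose k := Nat.mul_le_mul_left _ (ih (by omega))
      _ ≤ n.choose (k + 1) := three_mul_choose_le_choose_succ (by omega)

theorem choose_two_mul_mul_three_pow_le (n k : ℕ) :
    (2 * n).choose k * 3 ^ k ≤ (3 * n).choose k * 2 ^ k := by
  induction k with
  | zero => simp
  | succ k ih =>
    refine Nat.le_of_mul_le_mul_right ?_ k.succ_pos
    calc (2 * n).choose (k + 1) * 3 ^ (k + 1) * (k + 1)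
        = (2 * n).choose k * 3 ^ k * ((2 * n - k) * 3) := by
          rw [mul_right_comm, choose_succ_right_eq]; ring
      _ ≤ (3 * n).choose k * 2 ^ k * ((3 * n - k) * 2) :=
          Nat.mul_le_mul ih (by omega)
      _ = (3 * n).choose (k + 1) * 2 ^ (k + 1) * (k + 1) := by
          rw [mul_right_comm _ (2 ^ (k + 1)), choose_succ_right_eq]; ring

theorem choose_four_mul_mul_three_pow_le {j k : ℕ} (hjk : j ≤ k) :
    (4 * k).choose j * 3 ^ (2 * k - j) ≤ (4 * k).choose (2 * k) * 2 ^ k := by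
  have hmul : (4 * k).choose (2 * k) * (2 * k).choose k =
      (4 * k).choose k * (3 * k).choose k := by
    rw [choose_mul (by omega), show 4 * k - k = 3 * k by omega, show 2 * k - k = k by omega]
  refine Nat.le_of_mul_le_mul_right ?_ (choose_pos (show k ≤ 2 * k by omega))
  calc (4 * k).choose j * 3 ^ (2 * k - j) * (2 * k).choose k
      = (4 * k).choose j * 3 ^ (k - j) * ((2 * k).choose k * 3 ^ k) := by
        rw [show 2 * k - j = k - j + k by omega, pow_add]; ring
    _ ≤ (4 * k).choose k * ((3 * k).choose k * 2 ^ k) :=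
        Nat.mul_le_mul (choose_mul_three_pow_sub_le (by omega) hjk)
          (choose_two_mul_mul_three_pow_le k k)
    _ = (4 * k).choose (2 * k) * 2 ^ k * (2 * k).choose k := by
        rw [← mul_assoc, ← hmul]; ring

theorem sum_range_choose_mul_choose_mul_pow_le (k : ℕ) :
    (∑ j ∈ range (k + 1), (4 * k).choose j * (4 * k).choose (4 * k - j)) * 81 ^ k ≤
      40 ^ k * (8 * k).choose (4 * k) := by
  have hvdm : (4 * k).choose (2 * k) * (4 * k).choose (2 * k) ≤ (8 * k).choose (4 * k) := by
    simpa [← two_mul, ← mul_assoc] using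
      choose_mul_choose_le_add_choose (4 * k) (4 * k) (2 * k) (2 * k)
  have hterm : ∀ j ∈ range (k + 1), (4 * k).choose j * (4 * k).choose (4 * k - j) * 81 ^ k ≤
      4 ^ k * (8 * k).choose (4 * k) * 9 ^ j := by
    intro j hj
    have hjk : j ≤ k := Nat.lt_succ_iff.mp (mem_range.mp hj)
    have h81 : 81 ^ k = (3 ^ (2 * k - j)) ^ 2 * 9 ^ j := by
      rw [pow_right_comm, show 3 ^ 2 = 9 by rfl, ← pow_add, Nat.sub_add_cancel (by omega),
        pow_mul]
      norm_num
    have hcentral := choose_four_mul_mul_three_pow_le hjk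
    calc (4 * k).choose j * (4 * k).choose (4 * k - j) * 81 ^ k
        = ((4 * k).choose j * 3 ^ (2 * k - j)) ^ 2 * 9 ^ j := by
          rw [choose_symm (by omega), h81]; ring
      _ ≤ ((4 * k).choose (2 * k) * 2 ^ k) ^ 2 * 9 ^ j := by gcongr
      _ = 4 ^ k * ((4 * k).choose (2 * k) * (4 * k).choose (2 * k)) * 9 ^ j := by
          rw [mul_pow, pow_right_comm]; ring
      _ ≤ 4 ^ k * (8 * k).choose (4 * k) * 9 ^ j := by gcongr
  calc (∑ j ∈ range (k + 1), (4 * k).choose j * (4 * k).choose (4 * k - j)) * 81 ^ k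
      ≤ ∑ j ∈ range (k + 1), 4 ^ k * (8 * k).choose (4 * k) * 9 ^ j := by
        rw [sum_mul]; exact sum_le_sum hterm
    _ ≤ 4 ^ k * (8 * k).choose (4 * k) * 10 ^ k := by
        rw [← mul_sum]; exact Nat.mul_le_mul_left _ (sum_range_pow_le_succ_pow 9 k)
    _ = 40 ^ k * (8 * k).choose (4 * k) := by
        rw [show 40 = 4 * 10 by rfl, mul_pow]; ring

end Nat

theorem stmt_3_general (m : ℕ) (hdvd : 64 ∣ m)
    (A B : Finset (Fin m)) (hAB : A ⊆ B)
    (hA : A.card = m / 16) (hB : B.card = m / 8) :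
    ((Finset.univ.filter (fun C : Finset (Fin m) =>
        C ⊆ B ∧ C.card = m / 16 ∧ (C ∩ A).card ≤ m / 64)).card : ℝ) ≤
      Real.exp (-(m / 256 : ℝ)) * Nat.choose (m / 8) (m / 16) := by
  obtain ⟨k, rfl⟩ := hdvd
  have hcount := card_filter_subset_card_inter_le hAB (64 * k / 16) (64 * k / 64)
  simp only [hA, hB, show 64 * k / 16 = 4 * k by omega, show 64 * k / 8 = 8 * k by omega,
    show 64 * k / 64 = k by omega, show 8 * k - 4 * k = 4 * k by omega] at hcount ⊢
  have hnat := (Nat.mul_le_mul_right (81 ^ k) hcount).trans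
    (Nat.sum_range_choose_mul_choose_mul_pow_le k)
  have hexp : (40 / 81 : ℝ) ^ k ≤ Real.exp (-(((64 * k : ℕ) : ℝ) / 256)) := by
    rw [show -(((64 * k : ℕ) : ℝ) / 256) = k * (-(1 / 4)) by push_cast; ring, Real.exp_nat_mul]
    gcongr
    linarith [Real.add_one_le_exp (-(1 / 4))]
  calc _ ≤ (40 / 81 : ℝ) ^ k * (8 * k).choose (4 * k) := by
        rw [div_pow, div_mul_eq_mul_div, le_div_iff₀ (by positivity)]
        exact_mod_cast hnat
    _ ≤ _ := by gcongr

/-- |K_B \ J_A| ≤ e^{-m/256} · C(m/8, m/16). -/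
theorem stmt_3 (m : ℕ) (hm : 0 < m) (hdvd : 64 ∣ m)
    (A B : Finset (Fin m)) (hAB : A ⊆ B)
    (hA : A.card = m / 16) (hB : B.card = m / 8) :
    ((Finset.univ.filter (fun C : Finset (Fin m) =>
        C ⊆ B ∧ C.card = m / 16 ∧ (C ∩ A).card ≤ m / 64)).card : ℝ) ≤
      Real.exp (-(m / 256 : ℝ)) * Nat.choose (m / 8) (m / 16) :=
  stmt_3_general m hdvd A B hAB hA hB
end

section
/- Let X_1, X_2, …, X_n be {0,1}-valued random variables on a probability space that are negatively correlated, and let μ = E[∑_{i=1}^n X_i]. Then for every δ ∈ (0,1), Pr[∑_{i=1}^n X_i ≤ (1-δ)μ] ≤ exp(-δ²μ/2). -/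
/-!
Write `S = ∑ Xᵢ` and `t = log (1 - δ) ≤ 0`. Since every `Xᵢ` is `0/1`-valued,
`exp (t Xᵢ) = (1 - eᵗ) 1{Xᵢ = 0} + eᵗ`, and expanding the product `exp (t S) = ∏ exp (t Xᵢ)`
gives a nonnegative combination of indicators of the events `⋂ᵢ∈T {Xᵢ = 0}`. Negative
correlation bounds each of their probabilities by the product of the marginals, so
`E[exp (t S)] ≤ ∏ E[exp (t Xᵢ)] ≤ exp (μ (eᵗ - 1))`, exactly as in the independent case.
Markov's inequality then gives the bound `exp (-δ μ) / (1 - δ) ^ ((1 - δ) μ)`, and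
`(1 - δ) log (1 - δ) ≥ -δ + δ² / 2` turns it into `exp (-δ² μ / 2)`.
-/

open MeasureTheory ProbabilityTheory Real

lemma sub_inv_div_two_le_log {y : ℝ} (hy0 : 0 < y) (hy1 : y ≤ 1) : (y - y⁻¹) / 2 ≤ log y := by
  rw [← sinh_log hy0]
  exact sinh_le_self_iff.mpr (log_nonpos hy0.le hy1)

lemma neg_add_sq_div_two_le_one_sub_mul_log {δ : ℝ} (h0 : 0 ≤ δ) (h1 : δ < 1) :
    -δ + δ ^ 2 / 2 ≤ (1 - δ) * log (1 - δ) := by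
  have hpos : 0 < 1 - δ := by linarith
  calc -δ + δ ^ 2 / 2 = (1 - δ) * ((1 - δ - (1 - δ)⁻¹) / 2) := by field_simp; ring
    _ ≤ (1 - δ) * log (1 - δ) :=
      mul_le_mul_of_nonneg_left (sub_inv_div_two_le_log hpos (by linarith)) hpos.le

section

variable {Ω : Type*} [MeasurableSpace Ω] {P : Measure Ω}

theorem measureReal_le_one_sub_mul_le_exp_of_mgf_le [IsFiniteMeasure P] {S : Ω → ℝ}
    (hS : Measurable S) (hS0 : ∀ ω, 0 ≤ S ω) {μ δ : ℝ} (hμ : 0 ≤ μ) (hδ0 : 0 ≤ δ) (hδ1 : δ < 1)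
    (hmgf : ∀ t ≤ 0, mgf S P t ≤ exp (μ * (exp t - 1))) :
    P.real {ω | S ω ≤ (1 - δ) * μ} ≤ exp (-(δ ^ 2 * μ) / 2) := by
  set t := log (1 - δ)
  have ht : t ≤ 0 := log_nonpos (by linarith) (by linarith)
  have hint : Integrable (fun ω => exp (t * S ω)) P := by
    refine .of_bound (by fun_prop) 1 (ae_of_all _ fun ω => ?_)
    rw [norm_of_nonneg (exp_pos _).le, exp_le_one_iff]
    exact mul_nonpos_of_nonpos_of_nonneg ht (hS0 ω)
  calc P.real {ω | S ω ≤ (1 - δ) * μ} ≤ exp (-t * ((1 - δ) * μ)) * mgf S P t :=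
        measure_le_le_exp_mul_mgf _ ht hint
    _ ≤ exp (-t * ((1 - δ) * μ)) * exp (μ * (exp t - 1)) := by gcongr; exact hmgf t ht
    _ = exp (-(μ * ((1 - δ) * t + δ))) := by
        rw [← exp_add, exp_log (by linarith)]; ring_nf
    _ ≤ exp (-(δ ^ 2 * μ) / 2) := by
        have hkey : -δ + δ ^ 2 / 2 ≤ (1 - δ) * t := neg_add_sq_div_two_le_one_sub_mul_log hδ0 hδ1
        exact exp_le_exp.mpr (by nlinarith)

theorem integral_prod_mul_indicator_add_le [IsFiniteMeasure P] {ι : Type*} (s : Finset ι)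
    {A : ι → Set Ω} (hA : ∀ i, MeasurableSet (A i))
    (hcorr : ∀ u ⊆ s, P.real (⋂ i ∈ u, A i) ≤ ∏ i ∈ u, P.real (A i))
    {a b : ι → ℝ} (ha : ∀ i, 0 ≤ a i) (hb : ∀ i, 0 ≤ b i) :
    ∫ ω, ∏ i ∈ s, (a i * (A i).indicator 1 ω + b i) ∂P ≤ ∏ i ∈ s, (a i * P.real (A i) + b i) := by
  classical
  have hexpand : ∀ ω, ∏ i ∈ s, (a i * (A i).indicator 1 ω + b i) =
      ∑ u ∈ s.powerset, (∏ i ∈ u, a i) * (∏ i ∈ s \ u, b i) * (⋂ i ∈ u, A i).indicator 1 ω := by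
    intro ω
    rw [Finset.prod_add]
    refine Finset.sum_congr rfl fun u _ => ?_
    rw [Finset.prod_mul_distrib, prod_indicator_apply, Finset.prod_const_one]
    ring
  have hmeas : ∀ u : Finset ι, MeasurableSet (⋂ i ∈ u, A i) :=
    fun u => Finset.measurableSet_biInter u fun i _ => hA i
  simp_rw [hexpand]
  rw [integral_finsetSum _ fun u _ => ((integrable_const 1).indicator (hmeas u)).const_mul _]
  calc ∑ u ∈ s.powerset, ∫ ω, (∏ i ∈ u, a i) * (∏ i ∈ s \ u, b i) * (⋂ i ∈ u, A i).indicator 1 ω ∂P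
      ≤ ∑ u ∈ s.powerset, (∏ i ∈ u, a i) * (∏ i ∈ s \ u, b i) * ∏ i ∈ u, P.real (A i) := by
        gcongr with u hu
        rw [integral_const_mul, integral_indicator_one (hmeas u)]
        have := Finset.prod_nonneg fun i (_ : i ∈ u) => ha i
        have := Finset.prod_nonneg fun i (_ : i ∈ s \ u) => hb i
        gcongr
        exact hcorr u (Finset.mem_powerset.mp hu)
    _ = ∏ i ∈ s, (a i * P.real (A i) + b i) := by
        rw [Finset.prod_add]
        refine Finset.sum_congr rfl fun u _ => ?_
        rw [Finset.prod_mul_distrib]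
        ring

lemma integrable_of_eq_zero_or_eq_one [IsFiniteMeasure P] {X : Ω → ℝ} (hX : Measurable X)
    (h01 : ∀ ω, X ω = 0 ∨ X ω = 1) : Integrable X P :=
  .of_bound hX.aestronglyMeasurable 1 (ae_of_all _ fun ω => by rcases h01 ω with h | h <;> simp [h])

theorem mgf_le_exp_of_eq_zero_or_eq_one [IsProbabilityMeasure P] {X : Ω → ℝ} (hX : Measurable X)
    (h01 : ∀ ω, X ω = 0 ∨ X ω = 1) (t : ℝ) : mgf X P t ≤ exp (P[X] * (exp t - 1)) := by
  have hexp : ∀ ω, exp (t * X ω) = 1 + (exp t - 1) * X ω := by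
    intro ω; rcases h01 ω with h | h <;> simp [h]
  calc mgf X P t = 1 + (exp t - 1) * P[X] := by
        simp only [mgf, hexp]
        rw [integral_add (integrable_const _)
          ((integrable_of_eq_zero_or_eq_one hX h01).const_mul _), integral_const_mul]
        simp
    _ ≤ exp (P[X] * (exp t - 1)) := by linarith [add_one_le_exp (P[X] * (exp t - 1))]

theorem mgf_sum_le_prod_mgf_of_negCorrelated [IsProbabilityMeasure P] {ι : Type*}
    (s : Finset ι) {X : ι → Ω → ℝ} (hX : ∀ i, Measurable (X i))
    (h01 : ∀ i ω, X i ω = 0 ∨ X i ω = 1)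
    (hneg : ∀ u ⊆ s, P {ω | ∀ i ∈ u, X i ω = 0} ≤ ∏ i ∈ u, P {ω | X i ω = 0})
    {t : ℝ} (ht : t ≤ 0) :
    mgf (fun ω => ∑ i ∈ s, X i ω) P t ≤ ∏ i ∈ s, mgf (X i) P t := by
  have hA : ∀ i, MeasurableSet {ω | X i ω = 0} := fun i => hX i (measurableSet_singleton 0)
  have hexp : ∀ i ω, exp (t * X i ω) = (1 - exp t) * {ω | X i ω = 0}.indicator 1 ω + exp t := by
    intro i ω; rcases h01 i ω with h | h <;> simp [h]
  have hmgf : ∀ i, mgf (X i) P t = (1 - exp t) * P.real {ω | X i ω = 0} + exp t := by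
    intro i
    simp only [mgf, hexp]
    rw [integral_add (((integrable_const 1).indicator (hA i)).const_mul _) (integrable_const _),
      integral_const_mul, integral_indicator_one (hA i)]
    simp
  have hcorr : ∀ u ⊆ s, P.real (⋂ i ∈ u, {ω | X i ω = 0}) ≤ ∏ i ∈ u, P.real {ω | X i ω = 0} := by
    intro u hu
    have hinter : (⋂ i ∈ u, {ω | X i ω = 0}) = {ω | ∀ i ∈ u, X i ω = 0} := by ext; simp
    simp only [hinter, measureReal_def, ← ENNReal.toReal_prod]
    exact ENNReal.toReal_mono (ENNReal.prod_ne_top fun i _ => measure_ne_top _ _) (hneg u hu)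
  calc mgf (fun ω => ∑ i ∈ s, X i ω) P t
      = ∫ ω, ∏ i ∈ s, ((1 - exp t) * {ω | X i ω = 0}.indicator 1 ω + exp t) ∂P := by
        simp only [mgf, Finset.mul_sum, exp_sum, hexp]
    _ ≤ ∏ i ∈ s, ((1 - exp t) * P.real {ω | X i ω = 0} + exp t) :=
        integral_prod_mul_indicator_add_le s hA hcorr
          (fun _ => sub_nonneg.mpr (exp_le_one_iff.mpr ht)) fun _ => (exp_pos t).le
    _ = ∏ i ∈ s, mgf (X i) P t := by simp only [hmgf]

theorem mgf_sum_le_exp_of_negCorrelated [IsProbabilityMeasure P] {ι : Type*}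
    (s : Finset ι) {X : ι → Ω → ℝ} (hX : ∀ i, Measurable (X i))
    (h01 : ∀ i ω, X i ω = 0 ∨ X i ω = 1)
    (hneg : ∀ u ⊆ s, P {ω | ∀ i ∈ u, X i ω = 0} ≤ ∏ i ∈ u, P {ω | X i ω = 0})
    {t : ℝ} (ht : t ≤ 0) :
    mgf (fun ω => ∑ i ∈ s, X i ω) P t ≤ exp (P[fun ω => ∑ i ∈ s, X i ω] * (exp t - 1)) := by
  rw [integral_finsetSum s fun i _ => integrable_of_eq_zero_or_eq_one (hX i) (h01 i),
    Finset.sum_mul, exp_sum]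
  exact (mgf_sum_le_prod_mgf_of_negCorrelated s hX h01 hneg ht).trans <|
    Finset.prod_le_prod (fun _ _ => mgf_nonneg) fun i _ =>
      mgf_le_exp_of_eq_zero_or_eq_one (hX i) (h01 i) t

end

/-- lower-tail Chernoff bound for negatively correlated 0/1 variables. -/
theorem stmt_9 {Ω : Type*} [MeasurableSpace Ω] (P : Measure Ω)
    [IsProbabilityMeasure P] (n : ℕ) (X : Fin n → Ω → ℝ)
    (hmeas : ∀ i, Measurable (X i))
    (h01 : ∀ i ω, X i ω = 0 ∨ X i ω = 1)
    (hneg : ∀ (S : Finset (Fin n)) (b : ℝ), b = 0 ∨ b = 1 →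
      P {ω | ∀ i ∈ S, X i ω = b} ≤ ∏ i ∈ S, P {ω | X i ω = b})
    (μ : ℝ) (hμ : μ = ∫ ω, (∑ i, X i ω) ∂P)
    (δ : ℝ) (hδ : δ ∈ Set.Ioo (0 : ℝ) 1) :
    (P {ω | ∑ i, X i ω ≤ (1 - δ) * μ}).toReal ≤
      Real.exp (-(δ ^ 2 * μ) / 2) := by
  have hS0 : ∀ ω, 0 ≤ ∑ i, X i ω := fun ω =>
    Finset.sum_nonneg fun i _ => by rcases h01 i ω with h | h <;> simp [h]
  subst hμ
  exact measureReal_le_one_sub_mul_le_exp_of_mgf_le (Finset.measurable_sum _ fun i _ => hmeas i)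
    hS0 (integral_nonneg hS0) hδ.1.le hδ.2 fun t ht =>
      mgf_sum_le_exp_of_negCorrelated Finset.univ hmeas h01 (fun u _ => hneg u 0 (.inl rfl)) ht
end

section
/- Let q ≥ 2 be an integer and let K be a finite set with |K| = q². Let S be a family of q-element subsets of K and W a family of (q+1)-element subsets of K such that (i) every B ∈ W contains some A ∈ S as a subset, and (ii) every element of K belongs to some B ∈ W. Then ((q² - q)/(q+1)) · |S| + |W| ≥ (q-1) · q²/(q+1). -/
/-- the Zosin–Khuller gap instance bound. -/
theorem stmt_10 {V : Type*} [DecidableEq V] (q : ℕ) (hq : 2 ≤ q)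
    (K : Finset V) (hK : K.card = q ^ 2)
    (S W : Finset (Finset V))
    (hS : ∀ A ∈ S, A ⊆ K ∧ A.card = q)
    (hW : ∀ B ∈ W, B ⊆ K ∧ B.card = q + 1)
    (hi : ∀ B ∈ W, ∃ A ∈ S, A ⊆ B)
    (hii : ∀ t ∈ K, ∃ B ∈ W, t ∈ B) :
    ((q : ℝ) - 1) * q ^ 2 / (q + 1) ≤
      (((q : ℝ) ^ 2 - q) / (q + 1)) * S.card + W.card := by
  classical
  -- choice of a sub-set from S inside each B ∈ W
  set g : Finset V → Finset V := fun B =>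
    if h : ∃ A ∈ S, A ⊆ B then h.choose else ∅ with hg
  have hgS : ∀ B ∈ W, g B ∈ S := by
    intro B hB
    have h := hi B hB
    simp only [hg, dif_pos h]
    exact h.choose_spec.1
  have hgB : ∀ B ∈ W, g B ⊆ B := by
    intro B hB
    have h := hi B hB
    simp only [hg, dif_pos h]
    exact h.choose_spec.2
  -- covering inequality: q^2 ≤ q * |S| + |W|
  have key : q ^ 2 ≤ q * S.card + W.card := by
    have hsub : K ⊆ S.biUnion id ∪ W.biUnion (fun B => B \ g B) := by
      intro t ht
      obtain ⟨B, hB, htB⟩ := hii t ht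
      by_cases hmem : t ∈ g B
      · exact Finset.mem_union_left _ (Finset.mem_biUnion.2 ⟨g B, hgS B hB, hmem⟩)
      · exact Finset.mem_union_right _
          (Finset.mem_biUnion.2 ⟨B, hB, Finset.mem_sdiff.2 ⟨htB, hmem⟩⟩)
    have h1 : (S.biUnion id).card ≤ q * S.card := by
      calc (S.biUnion id).card ≤ ∑ A ∈ S, (id A).card := Finset.card_biUnion_le
        _ = ∑ A ∈ S, q := Finset.sum_congr rfl (fun A hA => (hS A hA).2)
        _ = q * S.card := by rw [Finset.sum_const, smul_eq_mul, mul_comm]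
    have h2 : (W.biUnion (fun B => B \ g B)).card ≤ W.card := by
      calc (W.biUnion (fun B => B \ g B)).card
          ≤ ∑ B ∈ W, (B \ g B).card := Finset.card_biUnion_le
        _ = ∑ B ∈ W, 1 := by
            refine Finset.sum_congr rfl (fun B hB => ?_)
            rw [Finset.card_sdiff_of_subset (hgB B hB), (hW B hB).2, (hS _ (hgS B hB)).2]
            omega
        _ = W.card := by simp
    calc q ^ 2 = K.card := hK.symm
      _ ≤ (S.biUnion id ∪ W.biUnion (fun B => B \ g B)).card :=
          Finset.card_le_card hsub
      _ ≤ (S.biUnion id).card + (W.biUnion (fun B => B \ g B)).card :=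
          Finset.card_union_le _ _
      _ ≤ q * S.card + W.card := Nat.add_le_add h1 h2
  -- pass to the reals
  have hq1 : (0 : ℝ) < (q : ℝ) + 1 := by positivity
  have hkeyR : (q : ℝ) ^ 2 ≤ q * S.card + W.card := by exact_mod_cast key
  have hqR : (2 : ℝ) ≤ (q : ℝ) := by exact_mod_cast hq
  have hrw : ((q:ℝ)^2 - q)/(q+1) * S.card + W.card
      = (((q:ℝ)^2 - q) * S.card + W.card * (q+1))/(q+1) := by
    field_simp
  rw [hrw, div_le_div_iff₀ hq1 hq1]
  rcases le_or_gt S.card q with hs | hs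
  · have hsR : (S.card : ℝ) ≤ q := by exact_mod_cast hs
    have hwR : (0 : ℝ) ≤ W.card := by positivity
    nlinarith [hkeyR, hsR, hwR]
  · have hsR : (q : ℝ) ≤ S.card := by exact_mod_cast hs.le
    have hwR : (0 : ℝ) ≤ W.card := by positivity
    have h3 : (0:ℝ) ≤ ((q:ℝ)^2 - q) * (q+1) := by nlinarith
    nlinarith [mul_le_mul_of_nonneg_left hsR h3, mul_nonneg hwR hq1.le]
end
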